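/- arXiv:1802.07182 — 5 statements merged into one kernel-verified Lean document; each statement's English description precedes it below -/
import Mathlib

section
/- Let X be a set, M ∈ ℕ, and A : X × (X → ℝ^M) → ℝ^M a function that has the GPAR dependence structure and is pointwise linear in its function argument. Then for every n ≥ 1, every f : X → ℝ^M, every x ∈ X, and every index i with i ≤ n, the i-th component of (A^n ⊙ f)(x) is zero, where A^n denotes the n-fold ∘-composition of A with itself. In particular A^M ⊙ f = 0 for all f. -/
/-- Composition of "operators" `A : X × (X → ℝ^M) → ℝ^M`:
`(A ∘ B)(x, y) = A(x, x' ↦ B(x', y))`. -/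
def gparComp {X : Type*} {M : ℕ}
    (A B : X × (X → Fin M → ℝ) → (Fin M → ℝ)) :
    X × (X → Fin M → ℝ) → (Fin M → ℝ) :=
  fun p => A (p.1, fun x' => B (x', p.2))

/-- Action of an operator on a function `u : X → ℝ^M`: `(A ⊙ u)(x) = A(x, u)`. -/
def gparAct {X : Type*} {M : ℕ}
    (A : X × (X → Fin M → ℝ) → (Fin M → ℝ)) (u : X → Fin M → ℝ) :
    X → Fin M → ℝ :=
  fun x => A (x, u)

/-- `gparPow A n` is the `n`-fold `∘`-composition of `A` with itself
(`gparPow A 0` is the identity operator `(x, y) ↦ y x`). -/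
def gparPow {X : Type*} {M : ℕ}
    (A : X × (X → Fin M → ℝ) → (Fin M → ℝ)) : ℕ → X × (X → Fin M → ℝ) → (Fin M → ℝ)
  | 0 => fun p => p.2 p.1
  | n + 1 => gparComp A (gparPow A n)

/-- `A` has the GPAR dependence structure: the first component of `A (x, y)` vanishes,
and the `i`-th component of `A (x, y)` depends only on the components `y_j`, `j < i`. -/
def GPARDep {X : Type*} {M : ℕ}
    (A : X × (X → Fin M → ℝ) → (Fin M → ℝ)) : Prop :=
  (∀ (x : X) (y : X → Fin M → ℝ) (i : Fin M), (i : ℕ) = 0 → A (x, y) i = 0) ∧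
  (∀ (x : X) (y y' : X → Fin M → ℝ) (i : Fin M),
    (∀ j : Fin M, (j : ℕ) < (i : ℕ) → ∀ x' : X, y x' j = y' x' j) →
    A (x, y) i = A (x, y') i)

theorem gparPow_nilpotent {X : Type*} {M : ℕ}
    (A : X × (X → Fin M → ℝ) → (Fin M → ℝ))
    (hdep : GPARDep A)
    (hlin : ∀ x : X, IsLinearMap ℝ (fun y : X → Fin M → ℝ => A (x, y))) :
    (∀ n : ℕ, 1 ≤ n → ∀ (f : X → Fin M → ℝ) (x : X) (i : Fin M),
      (i : ℕ) < n → gparAct (gparPow A n) f x i = 0) ∧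
    (∀ f : X → Fin M → ℝ, gparAct (gparPow A M) f = 0) := by
  have hzero : ∀ x : X, A (x, (0 : X → Fin M → ℝ)) = 0 := fun x => (hlin x).map_zero
  have main : ∀ n : ℕ, 1 ≤ n → ∀ (f : X → Fin M → ℝ) (x : X) (i : Fin M),
      (i : ℕ) < n → gparAct (gparPow A n) f x i = 0 := by
    intro n
    induction n with
    | zero => intro h; omega
    | succ n ih =>
      intro _ f x i hi
      show A (x, fun x' => gparPow A n (x', f)) i = 0
      by_cases h0 : (i : ℕ) = 0
      · exact hdep.1 _ _ _ h0
      · have hn : 1 ≤ n := by omega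
        have : A (x, fun x' => gparPow A n (x', f)) i = A (x, (0 : X → Fin M → ℝ)) i := by
          apply hdep.2
          intro j hj x'
          exact ih hn f x' j (by omega)
        rw [this, hzero]
        rfl
  refine ⟨main, fun f => ?_⟩
  funext x i
  rcases Nat.eq_zero_or_pos M with hM | hM
  · exact absurd i.isLt (by omega)
  · exact main M hM f x i i.isLt
end

section
/- Let X be a set, M ∈ ℕ, u : X → ℝ^M, and let A : X × (X → ℝ^M) → ℝ^M have the GPAR dependence structure. Define the operator T on functions f : X → ℝ^M by (T f)(x) = u(x) + A(x, f). Then for every index i ∈ {1, …, M} and every n ≥ i − 1, the i-th component of T^n u equals the i-th component of T^{i−1} u; consequently T^M u = T^{M−1} u, i.e. T^{M−1} u is a fixed point of T. -/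
/-- The GPAR operator `T` determined by `u` and `A`: `(T f)(x) = u(x) + A(x, f)`. -/
def gparT {X : Type*} {M : ℕ} (u : X → Fin M → ℝ)
    (A : X × (X → Fin M → ℝ) → (Fin M → ℝ)) :
    (X → Fin M → ℝ) → (X → Fin M → ℝ) :=
  fun f x => u x + A (x, f)

lemma gpar_aux {X : Type*} {M : ℕ} (u : X → Fin M → ℝ)
    (A : X × (X → Fin M → ℝ) → (Fin M → ℝ)) (hdep : GPARDep A) :
    ∀ k : ℕ, ∀ i : Fin M, (i : ℕ) = k → ∀ n m : ℕ, k ≤ n → k ≤ m → ∀ x,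
      (gparT u A)^[n] u x i = (gparT u A)^[m] u x i := by
  intro k
  induction k using Nat.strong_induction_on with
  | _ k ih =>
    intro i hik n m hn hm x
    have step : ∀ p : ℕ, (gparT u A)^[p+1] u x i = u x i + A (x, (gparT u A)^[p] u) i := by
      intro p
      rw [Function.iterate_succ_apply']
      rfl
    rcases Nat.eq_zero_or_pos k with hk | hk
    · subst hk
      have h0 : ∀ p : ℕ, (gparT u A)^[p] u x i = u x i := by
        intro p
        cases p with
        | zero => rfl
        | succ q => rw [step q, hdep.1 x _ i hik, add_zero]
      rw [h0, h0]
    · obtain ⟨n', rfl⟩ := Nat.exists_eq_succ_of_ne_zero (by omega : n ≠ 0)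
      obtain ⟨m', rfl⟩ := Nat.exists_eq_succ_of_ne_zero (by omega : m ≠ 0)
      rw [step, step]
      congr 1
      apply hdep.2
      intro j hj x'
      exact ih (j : ℕ) (by omega) j rfl n' m' (by omega) (by omega) x'

/-- For an operator with the GPAR dependence structure, the (1-based) `i`-th component of
`T^n u` stabilises after `i - 1` iterations; in particular `T^{M-1} u` is a fixed point. -/
theorem gparT_stabilises {X : Type*} {M : ℕ}
    (u : X → Fin M → ℝ)
    (A : X × (X → Fin M → ℝ) → (Fin M → ℝ))
    (hdep : GPARDep A) :
    (∀ (i : Fin M) (n : ℕ), (i : ℕ) ≤ n → ∀ x : X,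
      (gparT u A)^[n] u x i = (gparT u A)^[(i : ℕ)] u x i) ∧
    (gparT u A)^[M] u = (gparT u A)^[M - 1] u := by
  constructor
  · intro i n hn x
    exact gpar_aux u A hdep (i : ℕ) i rfl n (i : ℕ) hn le_rfl x
  · funext x i
    have hi := i.isLt
    exact gpar_aux u A hdep (i : ℕ) i rfl M (M - 1) (by omega) (by omega) x
end

section
/- Let X be a set, M ∈ ℕ, u : X → ℝ^M, and let A : X × (X → ℝ^M) → ℝ^M have the GPAR dependence structure. Define the operator T on functions f : X → ℝ^M by (T f)(x) = u(x) + A(x, f), and set g := T^{M−1} u. Then g satisfies the autoregressive equations: for every x ∈ X and every i, g(x)_i = u(x)_i + A(x, g)_i, where A(x, g)_i depends only on the components g_1, …, g_{i−1} of g. -/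
/-- `g := T^{M-1} u` satisfies the autoregressive equations
`g(x)_i = u(x)_i + A(x, g)_i`, where by `hdep` the term `A(x, g)_i` depends
only on the components `g_1, …, g_{i-1}` of `g`. -/
theorem gparT_autoregressive {X : Type*} {M : ℕ}
    (u : X → Fin M → ℝ)
    (A : X × (X → Fin M → ℝ) → (Fin M → ℝ))
    (hdep : GPARDep A)
    (g : X → Fin M → ℝ) (hg : g = (gparT u A)^[M - 1] u) :
    ∀ (x : X) (i : Fin M), g x i = u x i + A (x, g) i := by
  have stable : ∀ n : ℕ, ∀ (x : X) (i : Fin M), (i : ℕ) ≤ n →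
      (gparT u A)^[n] u x i = (gparT u A)^[n + 1] u x i := by
    intro n
    induction n with
    | zero =>
      intro x i hi
      have h0 : (i : ℕ) = 0 := Nat.le_zero.mp hi
      simp [gparT, hdep.1 x u i h0]
    | succ n ih =>
      intro x i hi
      rw [Function.iterate_succ_apply' (gparT u A) (n + 1) u,
        Function.iterate_succ_apply' (gparT u A) n u]
      simp only [gparT, Pi.add_apply]
      congr 1
      rw [← Function.iterate_succ_apply' (gparT u A) n u]
      exact hdep.2 x _ _ i fun j hj x' =>
        ih x' j (Nat.lt_succ_iff.mp (lt_of_lt_of_le hj hi))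
  intro x i
  have hle : (i : ℕ) ≤ M - 1 := Nat.le_pred_of_lt i.isLt
  have := stable (M - 1) x i hle
  rw [hg, this, Function.iterate_succ_apply' (gparT u A) (M - 1) u]
  simp [gparT]
end

section
/- Let X be a set, M ∈ ℕ, u : X → ℝ^M, and let A : X × (X → ℝ^M) → ℝ^M be pointwise linear in its function argument. Define the operator T on functions f : X → ℝ^M by (T f)(x) = u(x) + A(x, f). Then for every N ≥ 0, T^N u = ∑_{i=0}^{N} A^i ⊙ u, where A^i denotes the i-fold ∘-composition of A with itself and A^0 ⊙ u := u. In particular, if A additionally has the GPAR dependence structure, then the fixed point of the nonlinear equivalent model coincides with the linear equivalent model: T^{M−1} u = (∑_{i=0}^{M−1} A^i) ⊙ u. -/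
/-- For pointwise-linear `A`, `T^N u = ∑_{i=0}^N A^i ⊙ u`; in particular, if `A` has
the GPAR dependence structure, `T^{M-1} u = (∑_{i=0}^{M-1} A^i) ⊙ u`. -/
theorem gparT_geomSum {X : Type*} {M : ℕ}
    (u : X → Fin M → ℝ)
    (A : X × (X → Fin M → ℝ) → (Fin M → ℝ))
    (hlin : ∀ x : X, IsLinearMap ℝ (fun y : X → Fin M → ℝ => A (x, y))) :
    (∀ N : ℕ, (gparT u A)^[N] u =
      fun x => ∑ i ∈ Finset.range (N + 1), gparAct (gparPow A i) u x) ∧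
    (GPARDep A → (gparT u A)^[M - 1] u =
      gparAct (fun p => ∑ i ∈ Finset.range M, gparPow A i p) u) := by
  have key : ∀ N : ℕ, (gparT u A)^[N] u =
      fun x => ∑ i ∈ Finset.range (N + 1), gparAct (gparPow A i) u x := by
    intro N
    induction N with
    | zero =>
      funext x
      simp [gparAct, gparPow]
    | succ n ih =>
      rw [Function.iterate_succ_apply', ih]
      funext x
      have hL := IsLinearMap.mk' _ (hlin x)
      have hfn : (fun x' => ∑ i ∈ Finset.range (n + 1), gparAct (gparPow A i) u x')
          = ∑ i ∈ Finset.range (n + 1), (fun x' => gparAct (gparPow A i) u x') := by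
        funext x'
        simp [Finset.sum_apply]
      have hmap : A (x, fun x' => ∑ i ∈ Finset.range (n + 1), gparAct (gparPow A i) u x')
          = ∑ i ∈ Finset.range (n + 1), A (x, fun x' => gparAct (gparPow A i) u x') := by
        rw [hfn]
        have h := map_sum (IsLinearMap.mk' _ (hlin x))
          (fun i => fun x' => gparAct (gparPow A i) u x') (Finset.range (n + 1))
        simpa only [IsLinearMap.mk'_apply] using h
      show u x + A (x, fun x' => ∑ i ∈ Finset.range (n + 1), gparAct (gparPow A i) u x') = _
      rw [hmap]
      rw [Finset.sum_range_succ' (fun i => gparAct (gparPow A i) u x) (n + 1)]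
      have h0 : gparAct (gparPow A 0) u x = u x := rfl
      rw [h0, add_comm]
      congr 1
  refine ⟨key, fun _ => ?_⟩
  rcases Nat.eq_zero_or_pos M with hM | hM
  · subst hM
    funext x i
    exact i.elim0
  · rw [key (M - 1)]
    funext x
    rw [Nat.sub_add_cancel hM]
    simp [gparAct, Finset.sum_apply]
end

section
/- There exist an invertible 2 × 2 real matrix T all of whose entries are nonzero and diagonal 2 × 2 real matrices D₁ and D₂ with nonnegative diagonal entries such that no invertible lower triangular 2 × 2 real matrix L makes both L·(T·D₁·Tᵀ)·Lᵀ and L·(T·D₂·Tᵀ)·Lᵀ diagonal. In other words, the family of covariance matrices {T·D·Tᵀ : D diagonal PSD} produced by a dense constant mixing matrix T cannot in general be simultaneously diagonalised by congruence with a single constant, invertible, lower triangular matrix. -/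
/-!
Take `D₁, D₂` to be the diagonal matrix units, so that `T Dⱼ Tᵀ = tⱼ tⱼᵀ` for the columns `tⱼ`
of `T`, and congruence by `L` turns it into `(L tⱼ)(L tⱼ)ᵀ`, whose off-diagonal entry is
`(LT)₀ⱼ (LT)₁ⱼ`. For lower triangular invertible `L` we have `(LT)₀ⱼ = L₀₀ T₀ⱼ ≠ 0` as soon as
the first row of `T` has no zero entry, so both congruences are diagonal only if the second row
of `LT` vanishes, which is impossible for invertible `LT`.
-/

open Matrix

theorem mul_single_mul_transpose_apply {n R : Type*} [Fintype n] [DecidableEq n] [CommSemiring R]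
    (A : Matrix n n R) (j i k : n) : (A * single j j (1 : R) * Aᵀ) i k = A i j * A k j := by
  simp [mul_apply, single_apply, ite_and]

section LowerTriangular

variable {K : Type*} [Field K] {L : Matrix (Fin 2) (Fin 2) K}

theorem apply_zero_zero_ne_zero_of_isUnit (hL : IsUnit L) (hL01 : L 0 1 = 0) : L 0 0 ≠ 0 := by
  have hdet := (isUnit_iff_isUnit_det L).mp hL
  rw [det_fin_two, hL01, zero_mul, sub_zero] at hdet
  exact left_ne_zero_of_mul hdet.ne_zero

theorem mul_apply_zero_of_apply_zero_one (hL01 : L 0 1 = 0) (T : Matrix (Fin 2) (Fin 2) K)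
    (j : Fin 2) : (L * T) 0 j = L 0 0 * T 0 j := by
  simp [mul_apply, Fin.sum_univ_two, hL01]

theorem not_forall_isDiag_mul_mul_single_mul_transpose {T : Matrix (Fin 2) (Fin 2) K}
    (hT : IsUnit T) (hT0 : ∀ j, T 0 j ≠ 0) (hL : IsUnit L) (hL01 : L 0 1 = 0) :
    ¬ ∀ j, (L * (T * single j j 1 * Tᵀ) * Lᵀ).IsDiag := by
  intro hdiag
  have hrow : ∀ j, (L * T) 1 j = 0 := fun j => by
    have hcongr : L * (T * single j j 1 * Tᵀ) * Lᵀ = L * T * single j j 1 * (L * T)ᵀ := by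
      simp only [transpose_mul, Matrix.mul_assoc]
    have h := hdiag j (show (0 : Fin 2) ≠ 1 by decide)
    rw [hcongr, mul_single_mul_transpose_apply, mul_apply_zero_of_apply_zero_one hL01] at h
    exact (mul_eq_zero.mp h).resolve_left
      (mul_ne_zero (apply_zero_zero_ne_zero_of_isUnit hL hL01) (hT0 j))
  exact ((isUnit_iff_isUnit_det _).mp (hL.mul hT)).ne_zero (det_eq_zero_of_row_eq_zero 1 hrow)

end LowerTriangular

/-- A dense constant mixing matrix `T` produces a family of covariances
`T D Tᵀ` (`D` diagonal PSD) that cannot in general be simultaneously diagonalised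
by congruence with a single constant, invertible, lower triangular matrix. -/
theorem dense_mixing_not_simultaneously_triangularly_diagonalisable :
    ∃ (T D₁ D₂ : Matrix (Fin 2) (Fin 2) ℝ),
      IsUnit T ∧ (∀ i j : Fin 2, T i j ≠ 0) ∧
      D₁.IsDiag ∧ D₂.IsDiag ∧ (∀ i : Fin 2, 0 ≤ D₁ i i) ∧ (∀ i : Fin 2, 0 ≤ D₂ i i) ∧
      ∀ L : Matrix (Fin 2) (Fin 2) ℝ, IsUnit L → L 0 1 = 0 →
        ¬((L * (T * D₁ * Tᵀ) * Lᵀ).IsDiag ∧ (L * (T * D₂ * Tᵀ) * Lᵀ).IsDiag) := by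
  have hT : IsUnit !![(1 : ℝ), 1; 1, -1] := by
    rw [isUnit_iff_isUnit_det, det_fin_two_of]
    norm_num
  have hdense : ∀ i j : Fin 2, !![(1 : ℝ), 1; 1, -1] i j ≠ 0 := by
    intro i j
    fin_cases i <;> fin_cases j <;> norm_num
  have hsingle : ∀ j : Fin 2, (single j j (1 : ℝ)).IsDiag ∧ ∀ i, 0 ≤ single j j (1 : ℝ) i i :=
    fun j => ⟨diagonal_single j (1 : ℝ) ▸ isDiag_diagonal _,
      fun i => by rw [single_apply]; split_ifs <;> norm_num⟩
  refine ⟨_, _, _, hT, hdense, (hsingle 0).1, (hsingle 1).1, (hsingle 0).2, (hsingle 1).2, ?_⟩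
  rintro L hL hL01 ⟨h₀, h₁⟩
  refine not_forall_isDiag_mul_mul_single_mul_transpose hT (hdense 0) hL hL01 fun j => ?_
  fin_cases j
  exacts [h₀, h₁]
end
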